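/- For every smooth function ζ : ℝ^n → ℝ and every constant c ∈ ℝ, the bracket C^{(3)}_{ζ,c}(f,g) = {f,g} + m_ζ(f,g) + c·m₃(f,g) is a Lie bracket on D = C_c^∞(ℝ^n): it is bilinear, antisymmetric, maps D × D into D, and satisfies the Jacobi identity C(f, C(g,h)) + C(g, C(h,f)) + C(h, C(f,g)) = 0 for all f, g, h ∈ D. (This is the existence part, in the purely bosonic case n_- = 0, of the deformation C^{(3)}_{ζ,c₃} of Theorem 2 of the paper.) -/

import Mathlib

open MeasureTheory Finset

noncomputable section

/-- The constant Poisson bracket `{f,g}(x) = ∑_{A,B} ∂_A f(x) ω^{AB} ∂_B g(x)`. -/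
def pbr {n : ℕ} (ω : Matrix (Fin n) (Fin n) ℝ) (f g : (Fin n → ℝ) → ℝ) :
    (Fin n → ℝ) → ℝ :=
  fun x => ∑ A : Fin n, ∑ B : Fin n,
    fderiv ℝ f x (Pi.single A 1) * ω A B * fderiv ℝ g x (Pi.single B 1)

/-- Membership in `D = C_c^∞(ℝ^n)`: smooth with compact support. -/
def IsCcSmooth {n : ℕ} (f : (Fin n → ℝ) → ℝ) : Prop :=
  ContDiff ℝ (⊤ : ℕ∞) f ∧ HasCompactSupport f

/-- `f̄ = ∫_{ℝ^n} f(x) dx`. -/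
def intR {n : ℕ} (f : (Fin n → ℝ) → ℝ) : ℝ := ∫ x, f x

/-- The operator `ℰ f = f - (1/2) ∑_A x_A ∂_A f`. -/
def eulerE {n : ℕ} (f : (Fin n → ℝ) → ℝ) : (Fin n → ℝ) → ℝ :=
  fun x => f x - (1/2) * ∑ A : Fin n, x A * fderiv ℝ f x (Pi.single A 1)

/-- The 2-cochain `m₃(f,g) = (ℰf)·ḡ - (ℰg)·f̄`. -/
def m3 {n : ℕ} (f g : (Fin n → ℝ) → ℝ) : (Fin n → ℝ) → ℝ :=
  fun x => eulerE f x * intR g - eulerE g x * intR f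

/-- The 2-cochain `m_ζ(f,g) = {ζ,f}·ḡ - {ζ,g}·f̄`. -/
def mzeta {n : ℕ} (ω : Matrix (Fin n) (Fin n) ℝ) (ζ f g : (Fin n → ℝ) → ℝ) :
    (Fin n → ℝ) → ℝ :=
  fun x => pbr ω ζ f x * intR g - pbr ω ζ g x * intR f

namespace C3

variable {n : ℕ}

/-- directional derivative in coordinate direction -/
def pd (f : (Fin n → ℝ) → ℝ) (A : Fin n) : (Fin n → ℝ) → ℝ :=
  fun x => fderiv ℝ f x (Pi.single A 1)

/-- second derivative -/
def sd (f : (Fin n → ℝ) → ℝ) (x v w : Fin n → ℝ) : ℝ :=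
  fderiv ℝ (fderiv ℝ f) x v w

lemma contDiff_fderiv_apply {f : (Fin n → ℝ) → ℝ} (hf : ContDiff ℝ (⊤ : ℕ∞) f) (v : Fin n → ℝ) :
    ContDiff ℝ (⊤ : ℕ∞) (fun x => fderiv ℝ f x v) :=
  (hf.fderiv_right (by simp)).clm_apply contDiff_const

lemma contDiff_pd {f : (Fin n → ℝ) → ℝ} (hf : ContDiff ℝ (⊤ : ℕ∞) f) (A : Fin n) :
    ContDiff ℝ (⊤ : ℕ∞) (pd f A) := contDiff_fderiv_apply hf _

lemma hasFDerivAt_fderiv_apply {f : (Fin n → ℝ) → ℝ} (hf : ContDiff ℝ (⊤ : ℕ∞) f)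
    (v : Fin n → ℝ) (x : Fin n → ℝ) :
    HasFDerivAt (fun y => fderiv ℝ f y v)
      ((ContinuousLinearMap.apply ℝ ℝ v).comp (fderiv ℝ (fderiv ℝ f) x)) x := by
  have h1 : HasFDerivAt (fderiv ℝ f) (fderiv ℝ (fderiv ℝ f) x) x :=
    ((hf.fderiv_right (m := (⊤ : ℕ∞)) (by simp)).differentiable (by simp)).differentiableAt.hasFDerivAt
  exact ((ContinuousLinearMap.apply ℝ ℝ v).hasFDerivAt).comp x h1

lemma fderiv_fderiv_apply {f : (Fin n → ℝ) → ℝ} (hf : ContDiff ℝ (⊤ : ℕ∞) f)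
    (v x w : Fin n → ℝ) :
    fderiv ℝ (fun y => fderiv ℝ f y v) x w = sd f x w v := by
  rw [(hasFDerivAt_fderiv_apply hf v x).fderiv]; rfl

lemma fderiv_pd {f : (Fin n → ℝ) → ℝ} (hf : ContDiff ℝ (⊤ : ℕ∞) f) (A : Fin n) (x w : Fin n → ℝ) :
    fderiv ℝ (pd f A) x w = sd f x w (Pi.single A 1) :=
  fderiv_fderiv_apply hf _ x w

lemma sd_symm {f : (Fin n → ℝ) → ℝ} (hf : ContDiff ℝ (⊤ : ℕ∞) f) (x v w : Fin n → ℝ) :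
    sd f x v w = sd f x w v := by
  have h1 : ∀ y, HasFDerivAt f (fderiv ℝ f y) y := fun y =>
    (hf.differentiable (by simp)).differentiableAt.hasFDerivAt
  have h2 : HasFDerivAt (fderiv ℝ f) (fderiv ℝ (fderiv ℝ f) x) x :=
    ((hf.fderiv_right (m := (⊤ : ℕ∞)) (by simp)).differentiable (by simp)).differentiableAt.hasFDerivAt
  exact second_derivative_symmetric h1 h2 v w

lemma pd_eq_zero {f : (Fin n → ℝ) → ℝ} {x : Fin n → ℝ} (hx : x ∉ tsupport f) (A : Fin n) :
    pd f A x = 0 := by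
  have : fderiv ℝ f x = 0 := by
    by_contra h
    exact hx (support_fderiv_subset ℝ (by simpa [Function.support] using h))
  simp [pd, this]

lemma pbr_eq (ω : Matrix (Fin n) (Fin n) ℝ) (f g : (Fin n → ℝ) → ℝ) :
    pbr ω f g = fun x => ∑ A, ∑ B, pd f A x * ω A B * pd g B x := rfl

lemma contDiff_pbr {ω : Matrix (Fin n) (Fin n) ℝ} {f g : (Fin n → ℝ) → ℝ}
    (hf : ContDiff ℝ (⊤ : ℕ∞) f) (hg : ContDiff ℝ (⊤ : ℕ∞) g) : ContDiff ℝ (⊤ : ℕ∞) (pbr ω f g) := by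
  rw [pbr_eq]
  exact ContDiff.sum fun A _ => ContDiff.sum fun B _ =>
    ((contDiff_pd hf A).mul contDiff_const).mul (contDiff_pd hg B)

lemma contDiff_eulerE {f : (Fin n → ℝ) → ℝ} (hf : ContDiff ℝ (⊤ : ℕ∞) f) :
    ContDiff ℝ (⊤ : ℕ∞) (eulerE f) := by
  have : eulerE f = fun x => f x - (1/2) * ∑ A, x A * pd f A x := rfl
  rw [this]
  exact hf.sub (contDiff_const.mul (ContDiff.sum fun A _ =>
    (contDiff_apply ℝ ℝ A).mul (contDiff_pd hf A)))

lemma pbr_zero_right {ω : Matrix (Fin n) (Fin n) ℝ} {f g : (Fin n → ℝ) → ℝ}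
    {x : Fin n → ℝ} (hx : x ∉ tsupport g) : pbr ω f g x = 0 := by
  rw [pbr_eq]
  simp [pd_eq_zero hx]

lemma eulerE_zero {f : (Fin n → ℝ) → ℝ} {x : Fin n → ℝ} (hx : x ∉ tsupport f) :
    eulerE f x = 0 := by
  have hfx : f x = 0 := image_eq_zero_of_notMem_tsupport hx
  have : eulerE f x = f x - (1/2) * ∑ A, x A * pd f A x := rfl
  simp [this, hfx, pd_eq_zero hx]

lemma hcs_pbr {ω : Matrix (Fin n) (Fin n) ℝ} {f g : (Fin n → ℝ) → ℝ}
    (hg : HasCompactSupport g) : HasCompactSupport (pbr ω f g) :=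
  hg.mono' (fun x hx => by
    by_contra h
    exact hx (pbr_zero_right (by simpa using h)))

lemma hcs_eulerE {f : (Fin n → ℝ) → ℝ} (hf : HasCompactSupport f) :
    HasCompactSupport (eulerE f) :=
  hf.mono' (fun x hx => by
    by_contra h
    exact hx (eulerE_zero (by simpa using h)))

lemma diffAt_pd {f : (Fin n → ℝ) → ℝ} (hf : ContDiff ℝ (⊤ : ℕ∞) f) (A : Fin n) (x : Fin n → ℝ) :
    DifferentiableAt ℝ (pd f A) x :=
  ((contDiff_pd hf A).differentiable (by simp)).differentiableAt

/-- derivative of the Poisson bracket in direction v -/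
lemma fderiv_pbr_apply {ω : Matrix (Fin n) (Fin n) ℝ} {f g : (Fin n → ℝ) → ℝ}
    (hf : ContDiff ℝ (⊤ : ℕ∞) f) (hg : ContDiff ℝ (⊤ : ℕ∞) g) (x v : Fin n → ℝ) :
    fderiv ℝ (pbr ω f g) x v =
      ∑ A, ∑ B, (sd f x v (Pi.single A 1) * ω A B * pd g B x
        + pd f A x * ω A B * sd g x v (Pi.single B 1)) := by
  rw [pbr_eq]
  have hdiff : ∀ (A B : Fin n), DifferentiableAt ℝ (fun y => pd f A y * ω A B * pd g B y) x :=
    fun A B => ((diffAt_pd hf A x).mul_const (ω A B)).mul (diffAt_pd hg B x)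
  rw [fderiv_fun_sum (fun A _ => DifferentiableAt.fun_sum (fun B _ => hdiff A B))]
  rw [ContinuousLinearMap.sum_apply]
  refine Finset.sum_congr rfl fun A _ => ?_
  rw [fderiv_fun_sum (fun B _ => hdiff A B), ContinuousLinearMap.sum_apply]
  refine Finset.sum_congr rfl fun B _ => ?_
  rw [fderiv_fun_mul ((diffAt_pd hf A x).mul_const (ω A B)) (diffAt_pd hg B x)]
  rw [ContinuousLinearMap.add_apply, ContinuousLinearMap.smul_apply,
    ContinuousLinearMap.smul_apply, fderiv_mul_const (diffAt_pd hf A x),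
    ContinuousLinearMap.smul_apply, fderiv_pd hf A x v, fderiv_pd hg B x v]
  simp [pd, smul_eq_mul]; ring

/-- derivative of eulerE in direction v -/
lemma fderiv_eulerE_apply {f : (Fin n → ℝ) → ℝ} (hf : ContDiff ℝ (⊤ : ℕ∞) f) (x v : Fin n → ℝ) :
    fderiv ℝ (eulerE f) x v =
      fderiv ℝ f x v - (1/2) * ∑ A, (v A * pd f A x + x A * sd f x v (Pi.single A 1)) := by
  have he : eulerE f = fun x => f x - (1/2) * ∑ A, x A * pd f A x := rfl
  rw [he]
  have hdiff : ∀ A : Fin n, DifferentiableAt ℝ (fun y : Fin n → ℝ => y A * pd f A y) x :=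
    fun A => (differentiable_apply A).differentiableAt.mul (diffAt_pd hf A x)
  have hdf : DifferentiableAt ℝ f x := (hf.differentiable (by simp)).differentiableAt
  rw [fderiv_fun_sub hdf (((DifferentiableAt.fun_sum (fun A _ => hdiff A))).const_mul _),
    ContinuousLinearMap.sub_apply, fderiv_const_mul (DifferentiableAt.fun_sum fun A _ => hdiff A),
    ContinuousLinearMap.smul_apply, fderiv_fun_sum (fun A _ => hdiff A),
    ContinuousLinearMap.sum_apply]
  congr 2
  refine Finset.sum_congr rfl fun A _ => ?_
  rw [fderiv_fun_mul (differentiable_apply A).differentiableAt (diffAt_pd hf A x),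
    ContinuousLinearMap.add_apply, ContinuousLinearMap.smul_apply,
    ContinuousLinearMap.smul_apply, fderiv_pd hf A x v]
  have : fderiv ℝ (fun y : Fin n → ℝ => y A) x v = v A := by
    rw [(hasFDerivAt_apply A x).fderiv]
    rfl
  rw [this]; simp [smul_eq_mul]; ring

lemma omega_anti {ω : Matrix (Fin n) (Fin n) ℝ} (hω : ω.transpose = -ω) (A B : Fin n) :
    ω B A = -ω A B := by
  have := congrFun (congrFun hω A) B
  simpa [Matrix.transpose_apply] using this

lemma pbr_antisymm {ω : Matrix (Fin n) (Fin n) ℝ} (hω : ω.transpose = -ω)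
    (f g : (Fin n → ℝ) → ℝ) (x : Fin n → ℝ) : pbr ω f g x = -pbr ω g f x := by
  rw [pbr_eq, pbr_eq]
  simp only [← Finset.sum_neg_distrib]
  rw [Finset.sum_comm]
  refine Finset.sum_congr rfl fun B _ => Finset.sum_congr rfl fun A _ => ?_
  rw [omega_anti hω A B]; ring

/-- linearity of fderiv-apply on linear combinations -/
lemma fderiv_comb {f g : (Fin n → ℝ) → ℝ} (hf : ContDiff ℝ (⊤ : ℕ∞) f) (hg : ContDiff ℝ (⊤ : ℕ∞) g)
    (a b : ℝ) (x v : Fin n → ℝ) :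
    fderiv ℝ (fun y => a * f y + b * g y) x v = a * fderiv ℝ f x v + b * fderiv ℝ g x v := by
  have hdf : DifferentiableAt ℝ f x := (hf.differentiable (by simp)).differentiableAt
  have hdg : DifferentiableAt ℝ g x := (hg.differentiable (by simp)).differentiableAt
  rw [fderiv_fun_add (hdf.const_mul a) (hdg.const_mul b), ContinuousLinearMap.add_apply,
    fderiv_const_mul hdf, fderiv_const_mul hdg]
  simp

lemma pd_comb {f g : (Fin n → ℝ) → ℝ} (hf : ContDiff ℝ (⊤ : ℕ∞) f) (hg : ContDiff ℝ (⊤ : ℕ∞) g)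
    (a b : ℝ) (A : Fin n) (x : Fin n → ℝ) :
    pd (fun y => a * f y + b * g y) A x = a * pd f A x + b * pd g A x :=
  fderiv_comb hf hg a b x _

lemma contDiff_comb {f g : (Fin n → ℝ) → ℝ} (hf : ContDiff ℝ (⊤ : ℕ∞) f) (hg : ContDiff ℝ (⊤ : ℕ∞) g)
    (a b : ℝ) : ContDiff ℝ (⊤ : ℕ∞) (fun y => a * f y + b * g y) :=
  (hf.const_smul a).add (hg.const_smul b)

lemma pbr_comb_left {ω : Matrix (Fin n) (Fin n) ℝ} {f g : (Fin n → ℝ) → ℝ}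
    (hf : ContDiff ℝ (⊤ : ℕ∞) f) (hg : ContDiff ℝ (⊤ : ℕ∞) g) (h : (Fin n → ℝ) → ℝ) (a b : ℝ)
    (x : Fin n → ℝ) :
    pbr ω (fun y => a * f y + b * g y) h x = a * pbr ω f h x + b * pbr ω g h x := by
  simp only [pbr_eq, pd_comb hf hg, Finset.mul_sum]
  rw [← Finset.sum_add_distrib]
  refine Finset.sum_congr rfl fun A _ => ?_
  rw [← Finset.sum_add_distrib]
  exact Finset.sum_congr rfl fun B _ => by ring

lemma pbr_comb_right {ω : Matrix (Fin n) (Fin n) ℝ} {g h : (Fin n → ℝ) → ℝ}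
    (hg : ContDiff ℝ (⊤ : ℕ∞) g) (hh : ContDiff ℝ (⊤ : ℕ∞) h) (f : (Fin n → ℝ) → ℝ) (a b : ℝ)
    (x : Fin n → ℝ) :
    pbr ω f (fun y => a * g y + b * h y) x = a * pbr ω f g x + b * pbr ω f h x := by
  simp only [pbr_eq, pd_comb hg hh, Finset.mul_sum]
  rw [← Finset.sum_add_distrib]
  refine Finset.sum_congr rfl fun A _ => ?_
  rw [← Finset.sum_add_distrib]
  exact Finset.sum_congr rfl fun B _ => by ring

lemma eulerE_comb {f g : (Fin n → ℝ) → ℝ} (hf : ContDiff ℝ (⊤ : ℕ∞) f) (hg : ContDiff ℝ (⊤ : ℕ∞) g)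
    (a b : ℝ) (x : Fin n → ℝ) :
    eulerE (fun y => a * f y + b * g y) x = a * eulerE f x + b * eulerE g x := by
  have this1 : ∀ u : (Fin n → ℝ) → ℝ, eulerE u x = u x - (1/2) * ∑ A, x A * pd u A x :=
    fun u => rfl
  have h1 : ∑ A, x A * (a * pd f A x + b * pd g A x)
      = a * ∑ A, x A * pd f A x + b * ∑ A, x A * pd g A x := by
    rw [Finset.mul_sum, Finset.mul_sum, ← Finset.sum_add_distrib]
    exact Finset.sum_congr rfl fun A _ => by ring
  simp only [this1, pd_comb hf hg, h1]; ring

lemma sum_swap4 (F : Fin n → Fin n → Fin n → Fin n → ℝ) :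
    ∑ A, ∑ B, ∑ C, ∑ D, F A B C D = ∑ A, ∑ B, ∑ C, ∑ D, F C D A B := by
  calc ∑ A, ∑ B, ∑ C, ∑ D, F A B C D
      = ∑ B, ∑ A, ∑ C, ∑ D, F A B C D := Finset.sum_comm
    _ = ∑ B, ∑ C, ∑ A, ∑ D, F A B C D :=
        Finset.sum_congr rfl fun B _ => Finset.sum_comm
    _ = ∑ C, ∑ B, ∑ A, ∑ D, F A B C D := Finset.sum_comm
    _ = ∑ C, ∑ B, ∑ D, ∑ A, F A B C D :=
        Finset.sum_congr rfl fun C _ => Finset.sum_congr rfl fun B _ => Finset.sum_comm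
    _ = ∑ C, ∑ D, ∑ B, ∑ A, F A B C D :=
        Finset.sum_congr rfl fun C _ => Finset.sum_comm
    _ = ∑ C, ∑ D, ∑ A, ∑ B, F A B C D :=
        Finset.sum_congr rfl fun C _ => Finset.sum_congr rfl fun D _ => Finset.sum_comm

lemma key4 {ω : Matrix (Fin n) (Fin n) ℝ} (hω : ω.transpose = -ω)
    (u v : Fin n → ℝ) (X : Fin n → Fin n → ℝ) (hX : ∀ i j, X i j = X j i) :
    (∑ A, ∑ B, ∑ C, ∑ D, u A * ω A B * (X B C * ω C D * v D))
      + (∑ A, ∑ B, ∑ C, ∑ D, v A * ω A B * (u C * ω C D * X B D)) = 0 := by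
  have h2 : (∑ A, ∑ B, ∑ C, ∑ D, v A * ω A B * (u C * ω C D * X B D))
      = ∑ A, ∑ B, ∑ C, ∑ D, v C * ω C D * (u A * ω A B * X D B) :=
    sum_swap4 (fun A B C D => v A * ω A B * (u C * ω C D * X B D))
  have h1 : (∑ A, ∑ B, ∑ C, ∑ D, u A * ω A B * (X B C * ω C D * v D))
      = ∑ A, ∑ B, ∑ C, ∑ D, u A * ω A B * (X B D * ω D C * v C) :=
    Finset.sum_congr rfl fun A _ => Finset.sum_congr rfl fun B _ => Finset.sum_comm
  rw [h1, h2]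
  rw [← Finset.sum_add_distrib]
  refine Finset.sum_eq_zero fun A _ => ?_
  rw [← Finset.sum_add_distrib]
  refine Finset.sum_eq_zero fun B _ => ?_
  rw [← Finset.sum_add_distrib]
  refine Finset.sum_eq_zero fun C _ => ?_
  rw [← Finset.sum_add_distrib]
  refine Finset.sum_eq_zero fun D _ => ?_
  rw [hX D B, omega_anti hω C D]
  ring

lemma pd_eulerE {f : (Fin n → ℝ) → ℝ} (hf : ContDiff ℝ (⊤ : ℕ∞) f) (A : Fin n) (x : Fin n → ℝ) :
    pd (eulerE f) A x = (1/2) * pd f A x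
      - (1/2) * ∑ C, x C * sd f x (Pi.single A 1) (Pi.single C 1) := by
  show fderiv ℝ (eulerE f) x (Pi.single A 1) = _
  rw [fderiv_eulerE_apply hf]
  have hs : ∑ C, ((Pi.single A 1 : Fin n → ℝ) C * pd f C x
      + x C * sd f x (Pi.single A 1) (Pi.single C 1))
      = pd f A x + ∑ C, x C * sd f x (Pi.single A 1) (Pi.single C 1) := by
    rw [Finset.sum_add_distrib]
    congr 1
    rw [Finset.sum_eq_single A]
    · simp
    · intro b _ hb; simp [Pi.single_eq_of_ne hb]
    · simp
  rw [hs]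
  show pd f A x - _ = _
  ring

lemma sum_rot3 (F : Fin n → Fin n → Fin n → ℝ) :
    ∑ A, ∑ B, ∑ C, F A B C = ∑ C, ∑ A, ∑ B, F A B C := by
  calc ∑ A, ∑ B, ∑ C, F A B C
      = ∑ A, ∑ C, ∑ B, F A B C := Finset.sum_congr rfl fun A _ => Finset.sum_comm
    _ = ∑ C, ∑ A, ∑ B, F A B C := Finset.sum_comm

lemma helperL (p w q : ℝ) (xv s t : Fin n → ℝ) (h : ∀ i, s i = t i) :
    (1/2 * p - 1/2 * ∑ i, xv i * s i) * w * q
      = 1/2 * (p * w * q) - 1/2 * ∑ i, xv i * (t i * w * q) := by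
  have h1 : ∀ i, xv i * (t i * w * q) = (xv i * s i) * (w * q) := fun i => by rw [h i]; ring
  simp only [h1]
  rw [← Finset.sum_mul]
  ring

lemma helperR (p w q : ℝ) (xv s t : Fin n → ℝ) (h : ∀ i, s i = t i) :
    p * w * (1/2 * q - 1/2 * ∑ i, xv i * s i)
      = 1/2 * (p * w * q) - 1/2 * ∑ i, xv i * (p * w * t i) := by
  have h1 : ∀ i, xv i * (p * w * t i) = (xv i * s i) * (p * w) := fun i => by rw [h i]; ring
  simp only [h1]
  rw [← Finset.sum_mul]
  ring

lemma double_half (T : Fin n → Fin n → ℝ) :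
    ∑ A, ∑ B, (1/2 * T A B) = 1/2 * ∑ A, ∑ B, T A B := by
  rw [Finset.mul_sum]
  exact Finset.sum_congr rfl fun A _ => (Finset.mul_sum _ _ _).symm

lemma triple_pull (G : Fin n → Fin n → Fin n → ℝ) :
    ∑ A, ∑ B, (1/2 * ∑ C, G C A B) = 1/2 * ∑ C, ∑ A, ∑ B, G C A B := by
  rw [← sum_rot3 (fun A B C => G C A B), Finset.mul_sum]
  exact Finset.sum_congr rfl fun A _ => (Finset.mul_sum _ _ _).symm

/-- `ℰ` is a derivation of the Poisson bracket. -/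
lemma eulerE_pbr {ω : Matrix (Fin n) (Fin n) ℝ} {f g : (Fin n → ℝ) → ℝ}
    (hf : ContDiff ℝ (⊤ : ℕ∞) f) (hg : ContDiff ℝ (⊤ : ℕ∞) g) (x : Fin n → ℝ) :
    eulerE (pbr ω f g) x = pbr ω (eulerE f) g x + pbr ω f (eulerE g) x := by
  have hL : eulerE (pbr ω f g) x = pbr ω f g x
      - (1/2) * ∑ C, x C * fderiv ℝ (pbr ω f g) x (Pi.single C 1) := rfl
  have hU : ∑ C, x C * fderiv ℝ (pbr ω f g) x (Pi.single C 1)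
      = (∑ C, ∑ A, ∑ B, x C * (sd f x (Pi.single C 1) (Pi.single A 1) * ω A B * pd g B x))
        + (∑ C, ∑ A, ∑ B, x C * (pd f A x * ω A B * sd g x (Pi.single C 1) (Pi.single B 1))) := by
    rw [← Finset.sum_add_distrib]
    refine Finset.sum_congr rfl fun C _ => ?_
    rw [fderiv_pbr_apply hf hg, Finset.mul_sum, ← Finset.sum_add_distrib]
    refine Finset.sum_congr rfl fun A _ => ?_
    rw [Finset.mul_sum, ← Finset.sum_add_distrib]
    exact Finset.sum_congr rfl fun B _ => by ring
  have hR1 : pbr ω (eulerE f) g x = (1/2) * pbr ω f g x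
      - (1/2) * ∑ C, ∑ A, ∑ B,
          x C * (sd f x (Pi.single C 1) (Pi.single A 1) * ω A B * pd g B x) := by
    rw [congrFun (pbr_eq ω (eulerE f) g) x]
    have hterm : ∀ A B : Fin n, pd (eulerE f) A x * ω A B * pd g B x
        = 1/2 * (pd f A x * ω A B * pd g B x)
          - 1/2 * ∑ C, x C * (sd f x (Pi.single C 1) (Pi.single A 1) * ω A B * pd g B x) := by
      intro A B
      rw [pd_eulerE hf]
      exact helperL _ _ _ _ _ _ fun C => sd_symm hf x (Pi.single A 1) (Pi.single C 1)
    simp only [hterm, Finset.sum_sub_distrib]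
    rw [double_half, triple_pull, congrFun (pbr_eq ω f g) x]
  have hR2 : pbr ω f (eulerE g) x = (1/2) * pbr ω f g x
      - (1/2) * ∑ C, ∑ A, ∑ B,
          x C * (pd f A x * ω A B * sd g x (Pi.single C 1) (Pi.single B 1)) := by
    rw [congrFun (pbr_eq ω f (eulerE g)) x]
    have hterm : ∀ A B : Fin n, pd f A x * ω A B * pd (eulerE g) B x
        = 1/2 * (pd f A x * ω A B * pd g B x)
          - 1/2 * ∑ C, x C * (pd f A x * ω A B * sd g x (Pi.single C 1) (Pi.single B 1)) := by
      intro A B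
      rw [pd_eulerE hg]
      exact helperR _ _ _ _ _ _ fun C => sd_symm hg x (Pi.single B 1) (Pi.single C 1)
    simp only [hterm, Finset.sum_sub_distrib]
    rw [double_half, triple_pull, congrFun (pbr_eq ω f g) x]
  rw [hL, hU, hR1, hR2]
  ring

/-- expansion of a double bracket -/
lemma pbr_pbr {ω : Matrix (Fin n) (Fin n) ℝ} {f g h : (Fin n → ℝ) → ℝ}
    (hg : ContDiff ℝ (⊤ : ℕ∞) g) (hh : ContDiff ℝ (⊤ : ℕ∞) h) (x : Fin n → ℝ) :
    pbr ω f (pbr ω g h) x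
      = (∑ A, ∑ B, ∑ C, ∑ D, pd f A x * ω A B
          * (sd g x (Pi.single B 1) (Pi.single C 1) * ω C D * pd h D x))
        + (∑ A, ∑ B, ∑ C, ∑ D, pd f A x * ω A B
          * (pd g C x * ω C D * sd h x (Pi.single B 1) (Pi.single D 1))) := by
  rw [congrFun (pbr_eq ω f (pbr ω g h)) x]
  have hterm : ∀ A B : Fin n, pd f A x * ω A B * pd (pbr ω g h) B x
      = (∑ C, ∑ D, pd f A x * ω A B
          * (sd g x (Pi.single B 1) (Pi.single C 1) * ω C D * pd h D x))
        + (∑ C, ∑ D, pd f A x * ω A B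
          * (pd g C x * ω C D * sd h x (Pi.single B 1) (Pi.single D 1))) := by
    intro A B
    have hb : pd (pbr ω g h) B x = fderiv ℝ (pbr ω g h) x (Pi.single B 1) := rfl
    rw [hb, fderiv_pbr_apply hg hh, ← Finset.sum_add_distrib]
    rw [Finset.mul_sum]
    refine Finset.sum_congr rfl fun C _ => ?_
    rw [Finset.mul_sum, ← Finset.sum_add_distrib]
    exact Finset.sum_congr rfl fun D _ => by ring
  simp only [hterm, Finset.sum_add_distrib]

/-- Jacobi identity for the Poisson bracket. -/
lemma jacobi_pbr {ω : Matrix (Fin n) (Fin n) ℝ} (hω : ω.transpose = -ω)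
    {f g h : (Fin n → ℝ) → ℝ}
    (hf : ContDiff ℝ (⊤ : ℕ∞) f) (hg : ContDiff ℝ (⊤ : ℕ∞) g) (hh : ContDiff ℝ (⊤ : ℕ∞) h) (x : Fin n → ℝ) :
    pbr ω f (pbr ω g h) x + pbr ω g (pbr ω h f) x + pbr ω h (pbr ω f g) x = 0 := by
  have k1 := key4 hω (fun A => pd f A x) (fun A => pd h A x)
    (fun i j => sd g x (Pi.single i 1) (Pi.single j 1))
    (fun i j => sd_symm hg x _ _)
  have k2 := key4 hω (fun A => pd g A x) (fun A => pd f A x)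
    (fun i j => sd h x (Pi.single i 1) (Pi.single j 1))
    (fun i j => sd_symm hh x _ _)
  have k3 := key4 hω (fun A => pd h A x) (fun A => pd g A x)
    (fun i j => sd f x (Pi.single i 1) (Pi.single j 1))
    (fun i j => sd_symm hf x _ _)
  rw [pbr_pbr hg hh x, pbr_pbr hh hf x, pbr_pbr hf hg x]
  linarith [k1, k2, k3]

lemma hcs_fda {g : (Fin n → ℝ) → ℝ} (hg : HasCompactSupport g) (v : Fin n → ℝ) :
    HasCompactSupport (fun x => fderiv ℝ g x v) :=
  hg.mono' fun x hx =>
    support_fderiv_subset ℝ (fun h0 => hx (by simp [Function.mem_support.mp, h0]))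

lemma hcs_pd {g : (Fin n → ℝ) → ℝ} (hg : HasCompactSupport g) (B : Fin n) :
    HasCompactSupport (pd g B) :=
  hg.mono' fun x hx => by
    by_contra h
    exact hx (pd_eq_zero (by simpa using h) B)

lemma integrable_cc {f : (Fin n → ℝ) → ℝ} (hf : Continuous f) (h : HasCompactSupport f) :
    Integrable f := hf.integrable_of_hasCompactSupport h

/-- ∫ f' g = - ∫ f g' specialization -/
lemma parts {f g : (Fin n → ℝ) → ℝ} (hf : ContDiff ℝ (⊤ : ℕ∞) f) (hg : ContDiff ℝ (⊤ : ℕ∞) g)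
    (hgc : HasCompactSupport g) (v : Fin n → ℝ) :
    ∫ x, f x * fderiv ℝ g x v = - ∫ x, fderiv ℝ f x v * g x := by
  apply integral_mul_fderiv_eq_neg_fderiv_mul_of_integrable
  · apply integrable_cc
    · exact ((contDiff_fderiv_apply hf v).continuous).mul (hg.continuous)
    · exact hgc.mul_left
  · apply integrable_cc
    · exact (hf.continuous).mul ((contDiff_fderiv_apply hg v).continuous)
    · exact (hcs_fda hgc v).mul_left
  · exact integrable_cc ((hf.continuous).mul hg.continuous) hgc.mul_left
  · exact fun x _ => (hf.differentiable (by simp)).differentiableAt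
  · exact fun x _ => (hg.differentiable (by simp)).differentiableAt

/-- the integral of the bracket vanishes when the second entry has compact support -/
lemma intR_pbr_zero {ω : Matrix (Fin n) (Fin n) ℝ} (hω : ω.transpose = -ω)
    {f g : (Fin n → ℝ) → ℝ} (hf : ContDiff ℝ (⊤ : ℕ∞) f) (hg : ContDiff ℝ (⊤ : ℕ∞) g)
    (hgc : HasCompactSupport g) : intR (pbr ω f g) = 0 := by
  have hint : ∀ A B : Fin n, Integrable (fun x => pd f A x * ω A B * pd g B x) := by
    intro A B
    apply integrable_cc
    · exact ((contDiff_pd hf A).continuous.mul continuous_const).mul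
        (contDiff_pd hg B).continuous
    · exact (hcs_pd hgc B).mul_left
  have h1 : intR (pbr ω f g) = ∑ A, ∑ B, ∫ x, pd f A x * ω A B * pd g B x := by
    rw [intR, pbr_eq]
    rw [integral_finset_sum _ (fun A _ => integrable_finset_sum _ (fun B _ => hint A B))]
    exact Finset.sum_congr rfl fun A _ => integral_finset_sum _ (fun B _ => hint A B)
  have h2 : ∀ A B : Fin n, ∫ x, pd f A x * ω A B * pd g B x
      = ω A B * - ∫ x, sd f x (Pi.single B 1) (Pi.single A 1) * g x := by
    intro A B
    have heq : (fun x => pd f A x * ω A B * pd g B x)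
        = fun x => ω A B * (pd f A x * fderiv ℝ g x (Pi.single B 1)) := by
      funext x; show _ = ω A B * (pd f A x * pd g B x); ring
    rw [heq, integral_const_mul]
    congr 1
    rw [parts (contDiff_pd hf A) hg hgc (Pi.single B 1)]
    congr 1
    refine integral_congr_ae (Filter.Eventually.of_forall fun x => ?_)
    beta_reduce
    rw [fderiv_pd hf A x (Pi.single B 1)]
  rw [h1]
  have h3 : ∀ A B : Fin n, ∫ x, sd f x (Pi.single B 1) (Pi.single A 1) * g x
      = ∫ x, sd f x (Pi.single A 1) (Pi.single B 1) * g x := by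
    intro A B
    refine integral_congr_ae (Filter.Eventually.of_forall fun x => ?_)
    beta_reduce
    rw [sd_symm hf]
  set T : Fin n → Fin n → ℝ := fun A B => ∫ x, sd f x (Pi.single B 1) (Pi.single A 1) * g x
    with hT
  have hTsymm : ∀ A B, T A B = T B A := fun A B => h3 A B
  have hS : (∑ A, ∑ B, ω A B * T A B) = - ∑ A, ∑ B, ω A B * T A B := by
    nth_rewrite 1 [Finset.sum_comm]
    rw [← Finset.sum_neg_distrib]
    refine Finset.sum_congr rfl fun A _ => ?_
    rw [← Finset.sum_neg_distrib]
    refine Finset.sum_congr rfl fun B _ => ?_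
    rw [omega_anti hω A B, hTsymm B A]
    ring
  have hS0 : (∑ A, ∑ B, ω A B * T A B) = 0 := by linarith [hS]
  calc ∑ A, ∑ B, ∫ x, pd f A x * ω A B * pd g B x
      = ∑ A, ∑ B, (- (ω A B * T A B)) := by
        refine Finset.sum_congr rfl fun A _ => Finset.sum_congr rfl fun B _ => ?_
        rw [h2 A B]; ring
    _ = - ∑ A, ∑ B, ω A B * T A B := by
        simp [Finset.sum_neg_distrib]
    _ = 0 := by rw [hS0]; ring

/-- ∫ ℰf = (1 + n/2) f̄ -/
lemma intR_eulerE {f : (Fin n → ℝ) → ℝ} (hf : ContDiff ℝ (⊤ : ℕ∞) f) (hfc : HasCompactSupport f) :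
    intR (eulerE f) = (1 + (n : ℝ)/2) * intR f := by
  have hxA : ∀ A : Fin n, ∫ x : Fin n → ℝ, x A * pd f A x = - intR f := by
    intro A
    show (∫ x : Fin n → ℝ, x A * fderiv ℝ f x (Pi.single A 1)) = - intR f
    have hcoord : ContDiff ℝ (⊤ : ℕ∞) (fun x : Fin n → ℝ => x A) := contDiff_apply ℝ ℝ A
    have hp := parts hcoord hf hfc (Pi.single A 1)
    rw [hp]
    have hone : ∀ x : Fin n → ℝ, fderiv ℝ (fun y : Fin n → ℝ => y A) x (Pi.single A 1) = 1 := by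
      intro x
      rw [(hasFDerivAt_apply A x).fderiv]
      simp
    rw [show (fun x : Fin n → ℝ => fderiv ℝ (fun y : Fin n → ℝ => y A) x (Pi.single A 1) * f x)
        = fun x => f x from funext fun x => by rw [hone x]; ring]
    rfl
  have hint : ∀ A : Fin n, Integrable (fun x : Fin n → ℝ => x A * pd f A x) := fun A =>
    integrable_cc ((continuous_apply A).mul (contDiff_pd hf A).continuous)
      (hcs_pd hfc A).mul_left
  have hintf : Integrable f := integrable_cc hf.continuous hfc
  have hsum : Integrable (fun x : Fin n → ℝ => ∑ A, x A * pd f A x) :=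
    integrable_finset_sum _ fun A _ => hint A
  have h0 : intR (eulerE f)
      = intR f - (1/2) * ∑ A, ∫ x : Fin n → ℝ, x A * pd f A x := by
    rw [intR, show (fun x => eulerE f x)
        = fun x => f x - (1/2) * ∑ A, x A * pd f A x from rfl]
    rw [integral_sub hintf (hsum.const_mul _), integral_const_mul,
      integral_finset_sum _ fun A _ => hint A]
    rfl
  rw [h0]
  rw [Finset.sum_congr rfl fun A _ => hxA A, Finset.sum_const, Finset.card_univ,
    Fintype.card_fin]
  ring

end C3

namespace C3
variable {n : ℕ}

lemma fderiv_comb3 {u v w : (Fin n → ℝ) → ℝ} (hu : ContDiff ℝ (⊤ : ℕ∞) u) (hv : ContDiff ℝ (⊤ : ℕ∞) v)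
    (hw : ContDiff ℝ (⊤ : ℕ∞) w) (α β : ℝ) (x t : Fin n → ℝ) :
    fderiv ℝ (fun y => u y + (α * v y - β * w y)) x t
      = fderiv ℝ u x t + (α * fderiv ℝ v x t - β * fderiv ℝ w x t) := by
  have du : DifferentiableAt ℝ u x := (hu.differentiable (by simp)).differentiableAt
  have dv : DifferentiableAt ℝ v x := (hv.differentiable (by simp)).differentiableAt
  have dw : DifferentiableAt ℝ w x := (hw.differentiable (by simp)).differentiableAt
  rw [fderiv_fun_add du ((dv.const_mul α).fun_sub (dw.const_mul β)), ContinuousLinearMap.add_apply,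
    fderiv_fun_sub (dv.const_mul α) (dw.const_mul β), ContinuousLinearMap.sub_apply,
    fderiv_const_mul dv, fderiv_const_mul dw]
  simp

lemma pd_comb3 {u v w : (Fin n → ℝ) → ℝ} (hu : ContDiff ℝ (⊤ : ℕ∞) u) (hv : ContDiff ℝ (⊤ : ℕ∞) v)
    (hw : ContDiff ℝ (⊤ : ℕ∞) w) (α β : ℝ) (A : Fin n) (x : Fin n → ℝ) :
    pd (fun y => u y + (α * v y - β * w y)) A x
      = pd u A x + (α * pd v A x - β * pd w A x) :=
  fderiv_comb3 hu hv hw α β x _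

lemma pbr_comb3_right {ω : Matrix (Fin n) (Fin n) ℝ} {u v w : (Fin n → ℝ) → ℝ}
    (hu : ContDiff ℝ (⊤ : ℕ∞) u) (hv : ContDiff ℝ (⊤ : ℕ∞) v) (hw : ContDiff ℝ (⊤ : ℕ∞) w)
    (f : (Fin n → ℝ) → ℝ) (α β : ℝ) (x : Fin n → ℝ) :
    pbr ω f (fun y => u y + (α * v y - β * w y)) x
      = pbr ω f u x + (α * pbr ω f v x - β * pbr ω f w x) := by
  simp only [pbr_eq, pd_comb3 hu hv hw]
  have hterm : ∀ A B : Fin n,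
      pd f A x * ω A B * (pd u B x + (α * pd v B x - β * pd w B x))
        = pd f A x * ω A B * pd u B x + (α * (pd f A x * ω A B * pd v B x)
            - β * (pd f A x * ω A B * pd w B x)) := fun A B => by ring
  simp only [hterm, Finset.sum_add_distrib, Finset.sum_sub_distrib, ← Finset.mul_sum]

lemma eulerE_comb3 {u v w : (Fin n → ℝ) → ℝ} (hu : ContDiff ℝ (⊤ : ℕ∞) u) (hv : ContDiff ℝ (⊤ : ℕ∞) v)
    (hw : ContDiff ℝ (⊤ : ℕ∞) w) (α β : ℝ) (x : Fin n → ℝ) :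
    eulerE (fun y => u y + (α * v y - β * w y)) x
      = eulerE u x + (α * eulerE v x - β * eulerE w x) := by
  have h0 : ∀ p : (Fin n → ℝ) → ℝ, eulerE p x = p x - (1/2) * ∑ A, x A * pd p A x :=
    fun p => rfl
  have h1 : ∑ A, x A * (pd u A x + (α * pd v A x - β * pd w A x))
      = (∑ A, x A * pd u A x) + (α * ∑ A, x A * pd v A x - β * ∑ A, x A * pd w A x) := by
    rw [Finset.mul_sum, Finset.mul_sum, ← Finset.sum_sub_distrib, ← Finset.sum_add_distrib]
    exact Finset.sum_congr rfl fun A _ => by ring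
  simp only [h0, pd_comb3 hu hv hw, h1]
  ring

lemma pd_neg {u : (Fin n → ℝ) → ℝ} (A : Fin n) (x : Fin n → ℝ) :
    pd (fun y => -(u y)) A x = -(pd u A x) := by
  show fderiv ℝ (fun y => -(u y)) x (Pi.single A 1) = _
  rw [fderiv_fun_neg]
  rfl

lemma pbr_neg_right {ω : Matrix (Fin n) (Fin n) ℝ} (f u : (Fin n → ℝ) → ℝ) (x : Fin n → ℝ) :
    pbr ω f (fun y => -(u y)) x = - pbr ω f u x := by
  simp only [pbr_eq, pd_neg]
  rw [← Finset.sum_neg_distrib]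
  refine Finset.sum_congr rfl fun A _ => ?_
  rw [← Finset.sum_neg_distrib]
  exact Finset.sum_congr rfl fun B _ => by ring

lemma fderiv_acm {u v : (Fin n → ℝ) → ℝ} (hu : ContDiff ℝ (⊤ : ℕ∞) u) (hv : ContDiff ℝ (⊤ : ℕ∞) v)
    (c0 : ℝ) (x t : Fin n → ℝ) :
    fderiv ℝ (fun y => u y + c0 * v y) x t = fderiv ℝ u x t + c0 * fderiv ℝ v x t := by
  have du : DifferentiableAt ℝ u x := (hu.differentiable (by simp)).differentiableAt
  have dv : DifferentiableAt ℝ v x := (hv.differentiable (by simp)).differentiableAt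
  rw [fderiv_fun_add du (dv.const_mul c0), ContinuousLinearMap.add_apply, fderiv_const_mul dv]
  simp

lemma pbr_acm_right {ω : Matrix (Fin n) (Fin n) ℝ} {u v : (Fin n → ℝ) → ℝ}
    (hu : ContDiff ℝ (⊤ : ℕ∞) u) (hv : ContDiff ℝ (⊤ : ℕ∞) v) (f : (Fin n → ℝ) → ℝ) (c0 : ℝ)
    (x : Fin n → ℝ) :
    pbr ω f (fun y => u y + c0 * v y) x = pbr ω f u x + c0 * pbr ω f v x := by
  have hpd : ∀ (A : Fin n), pd (fun y => u y + c0 * v y) A x = pd u A x + c0 * pd v A x :=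
    fun A => fderiv_acm hu hv c0 x _
  simp only [pbr_eq, hpd]
  have hterm : ∀ A B : Fin n,
      pd f A x * ω A B * (pd u B x + c0 * pd v B x)
        = pd f A x * ω A B * pd u B x + c0 * (pd f A x * ω A B * pd v B x) := fun A B => by ring
  simp only [hterm, Finset.sum_add_distrib, ← Finset.mul_sum]

end C3

/-- The first order part of the deformation. -/
def Wop {n : ℕ} (ω : Matrix (Fin n) (Fin n) ℝ) (ζ : (Fin n → ℝ) → ℝ) (c : ℝ)
    (u : (Fin n → ℝ) → ℝ) : (Fin n → ℝ) → ℝ :=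
  fun y => pbr ω ζ u y + c * eulerE u y

namespace C3
variable {n : ℕ}

lemma contDiff_W {ω : Matrix (Fin n) (Fin n) ℝ} {ζ u : (Fin n → ℝ) → ℝ}
    (hζ : ContDiff ℝ (⊤ : ℕ∞) ζ) (hu : ContDiff ℝ (⊤ : ℕ∞) u) (c : ℝ) :
    ContDiff ℝ (⊤ : ℕ∞) (Wop ω ζ c u) :=
  (contDiff_pbr hζ hu).add (contDiff_const.mul (contDiff_eulerE hu))

lemma hcs_W {ω : Matrix (Fin n) (Fin n) ℝ} {ζ u : (Fin n → ℝ) → ℝ}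
    (hu : HasCompactSupport u) (c : ℝ) :
    HasCompactSupport (Wop ω ζ c u) :=
  (hcs_pbr hu).add ((hcs_eulerE hu).mul_left)

/-- `W = ad_ζ + c ℰ` is a derivation of the Poisson bracket (antisymmetrized form). -/
lemma W_der {ω : Matrix (Fin n) (Fin n) ℝ} (hω : ω.transpose = -ω)
    {ζ : (Fin n → ℝ) → ℝ} (hζ : ContDiff ℝ (⊤ : ℕ∞) ζ) (c : ℝ) {u v : (Fin n → ℝ) → ℝ}
    (hu : ContDiff ℝ (⊤ : ℕ∞) u) (hv : ContDiff ℝ (⊤ : ℕ∞) v) (x : Fin n → ℝ) :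
    pbr ω u (Wop ω ζ c v) x - pbr ω v (Wop ω ζ c u) x
      - (pbr ω ζ (pbr ω u v) x + c * eulerE (pbr ω u v) x) = 0 := by
  have e1 : pbr ω u (Wop ω ζ c v) x
      = pbr ω u (pbr ω ζ v) x + c * pbr ω u (eulerE v) x :=
    pbr_acm_right (contDiff_pbr hζ hv) (contDiff_eulerE hv) u c x
  have e2 : pbr ω v (Wop ω ζ c u) x
      = pbr ω v (pbr ω ζ u) x + c * pbr ω v (eulerE u) x :=
    pbr_acm_right (contDiff_pbr hζ hu) (contDiff_eulerE hu) v c x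
  have jz := jacobi_pbr hω hζ hu hv x
  have hvz : pbr ω v ζ = fun y => -(pbr ω ζ v y) := funext fun y => pbr_antisymm hω v ζ y
  have e3 : pbr ω u (pbr ω v ζ) x = - pbr ω u (pbr ω ζ v) x := by
    rw [hvz]
    exact pbr_neg_right u (pbr ω ζ v) x
  have ed := eulerE_pbr (ω := ω) hu hv x
  have ea : pbr ω (eulerE u) v x = - pbr ω v (eulerE u) x := pbr_antisymm hω _ _ x
  rw [e1, e2]
  rw [e3] at jz
  rw [ea] at ed
  linear_combination -jz - c * ed

lemma intR_comb {f g : (Fin n → ℝ) → ℝ} (hf : IsCcSmooth f) (hg : IsCcSmooth g)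
    (a b : ℝ) : intR (fun y => a * f y + b * g y) = a * intR f + b * intR g := by
  rw [intR, integral_add ((integrable_cc hf.1.continuous hf.2).const_mul a)
      ((integrable_cc hg.1.continuous hg.2).const_mul b), integral_const_mul, integral_const_mul]
  rfl

lemma intR_W {ω : Matrix (Fin n) (Fin n) ℝ} (hω : ω.transpose = -ω)
    {ζ : (Fin n → ℝ) → ℝ} (hζ : ContDiff ℝ (⊤ : ℕ∞) ζ) (c : ℝ) {u : (Fin n → ℝ) → ℝ}
    (hu : IsCcSmooth u) :
    intR (Wop ω ζ c u) = c * (1 + (n : ℝ)/2) * intR u := by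
  have h1 : Integrable (pbr ω ζ u) :=
    integrable_cc (contDiff_pbr hζ hu.1).continuous (hcs_pbr hu.2)
  have h2 : Integrable (eulerE u) :=
    integrable_cc (contDiff_eulerE hu.1).continuous (hcs_eulerE hu.2)
  have : intR (Wop ω ζ c u) = intR (pbr ω ζ u) + c * intR (eulerE u) := by
    rw [intR, show (fun y => Wop ω ζ c u y)
        = fun y => pbr ω ζ u y + c * eulerE u y from rfl,
      integral_add h1 (h2.const_mul c), integral_const_mul]
    rfl
  rw [this, intR_pbr_zero hω hζ hu.1 hu.2, intR_eulerE hu.1 hu.2]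
  ring

end C3

open C3 in
/-- `C^{(3)}_{ζ,c}(f,g) = {f,g} + m_ζ(f,g) + c·m₃(f,g)` is a Lie
bracket on `C_c^∞(ℝ^n)` (existence part, bosonic case, of Theorem 2). -/
theorem deformed_bracket_C3_is_lie_bracket
    (n : ℕ) (hn : 0 < n) (hne : Even n)
    (ω : Matrix (Fin n) (Fin n) ℝ) (hω : ω.transpose = -ω) (hdet : IsUnit ω.det)
    (ζ : (Fin n → ℝ) → ℝ) (hζ : ContDiff ℝ (⊤ : ℕ∞) ζ) (c : ℝ) :
    (∀ (a b : ℝ) (f g h : (Fin n → ℝ) → ℝ), IsCcSmooth f → IsCcSmooth g → IsCcSmooth h →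
        (fun x => pbr ω (fun y => a * f y + b * g y) h x
            + mzeta ω ζ (fun y => a * f y + b * g y) h x
            + c * m3 (fun y => a * f y + b * g y) h x)
          = fun x => a * (pbr ω f h x + mzeta ω ζ f h x + c * m3 f h x)
              + b * (pbr ω g h x + mzeta ω ζ g h x + c * m3 g h x)) ∧
    (∀ (a b : ℝ) (f g h : (Fin n → ℝ) → ℝ), IsCcSmooth f → IsCcSmooth g → IsCcSmooth h →
        (fun x => pbr ω f (fun y => a * g y + b * h y) x
            + mzeta ω ζ f (fun y => a * g y + b * h y) x
            + c * m3 f (fun y => a * g y + b * h y) x)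
          = fun x => a * (pbr ω f g x + mzeta ω ζ f g x + c * m3 f g x)
              + b * (pbr ω f h x + mzeta ω ζ f h x + c * m3 f h x)) ∧
    (∀ f g : (Fin n → ℝ) → ℝ, IsCcSmooth f → IsCcSmooth g →
        IsCcSmooth (fun x => pbr ω f g x + mzeta ω ζ f g x + c * m3 f g x)) ∧
    (∀ f g : (Fin n → ℝ) → ℝ, IsCcSmooth f → IsCcSmooth g →
        (fun x => pbr ω f g x + mzeta ω ζ f g x + c * m3 f g x)
          = fun x => -(pbr ω g f x + mzeta ω ζ g f x + c * m3 g f x)) ∧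
    (∀ f g h : (Fin n → ℝ) → ℝ, IsCcSmooth f → IsCcSmooth g → IsCcSmooth h →
        ∀ x,
          (pbr ω f (fun y => pbr ω g h y + mzeta ω ζ g h y + c * m3 g h y) x
              + mzeta ω ζ f (fun y => pbr ω g h y + mzeta ω ζ g h y + c * m3 g h y) x
              + c * m3 f (fun y => pbr ω g h y + mzeta ω ζ g h y + c * m3 g h y) x)
          + (pbr ω g (fun y => pbr ω h f y + mzeta ω ζ h f y + c * m3 h f y) x
              + mzeta ω ζ g (fun y => pbr ω h f y + mzeta ω ζ h f y + c * m3 h f y) x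
              + c * m3 g (fun y => pbr ω h f y + mzeta ω ζ h f y + c * m3 h f y) x)
          + (pbr ω h (fun y => pbr ω f g y + mzeta ω ζ f g y + c * m3 f g y) x
              + mzeta ω ζ h (fun y => pbr ω f g y + mzeta ω ζ f g y + c * m3 f g y) x
              + c * m3 h (fun y => pbr ω f g y + mzeta ω ζ f g y + c * m3 f g y) x) = 0) := by
  refine ⟨?_, ?_, ?_, ?_, ?_⟩
  · -- left linearity
    intro a b f g h hf hg hh
    funext x
    simp only [mzeta, m3]
    rw [pbr_comb_left hf.1 hg.1 h a b x, pbr_comb_right hf.1 hg.1 ζ a b x,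
      eulerE_comb hf.1 hg.1 a b x, intR_comb hf hg a b]
    ring
  · -- right linearity
    intro a b f g h hf hg hh
    funext x
    simp only [mzeta, m3]
    rw [pbr_comb_right hg.1 hh.1 f a b x, pbr_comb_right hg.1 hh.1 ζ a b x,
      eulerE_comb hg.1 hh.1 a b x, intR_comb hg hh a b]
    ring
  · -- closure
    intro f g hf hg
    constructor
    · refine ContDiff.add (ContDiff.add (contDiff_pbr hf.1 hg.1) ?_) ?_
      · exact ((contDiff_pbr hζ hf.1).mul contDiff_const).sub
          ((contDiff_pbr hζ hg.1).mul contDiff_const)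
      · exact contDiff_const.mul (((contDiff_eulerE hf.1).mul contDiff_const).sub
          ((contDiff_eulerE hg.1).mul contDiff_const))
    · refine HasCompactSupport.intro (hf.2.union hg.2) fun x hx => ?_
      have hxf : x ∉ tsupport f := fun hmem => hx (Set.mem_union_left _ hmem)
      have hxg : x ∉ tsupport g := fun hmem => hx (Set.mem_union_right _ hmem)
      simp only [mzeta, m3]
      rw [pbr_zero_right hxg, pbr_zero_right (g := f) hxf, pbr_zero_right (g := g) hxg,
        eulerE_zero hxf, eulerE_zero hxg]
      ring
  · -- antisymmetry
    intro f g hf hg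
    funext x
    simp only [mzeta, m3]
    rw [pbr_antisymm hω f g x]
    ring
  · -- Jacobi identity
    intro f g h hf hg hh x
    have hWint : ∀ u : (Fin n → ℝ) → ℝ, IsCcSmooth u →
        intR (Wop ω ζ c u) = c * (1 + (n : ℝ)/2) * intR u := fun u hu => intR_W hω hζ c hu
    have hexp : ∀ u v w : (Fin n → ℝ) → ℝ, IsCcSmooth u → IsCcSmooth v → IsCcSmooth w →
        pbr ω u (fun y => pbr ω v w y + mzeta ω ζ v w y + c * m3 v w y) x
          + mzeta ω ζ u (fun y => pbr ω v w y + mzeta ω ζ v w y + c * m3 v w y) x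
          + c * m3 u (fun y => pbr ω v w y + mzeta ω ζ v w y + c * m3 v w y) x
        = pbr ω u (pbr ω v w) x
          + (intR w * pbr ω u (Wop ω ζ c v) x - intR v * pbr ω u (Wop ω ζ c w) x)
          - intR u * (pbr ω ζ (pbr ω v w) x
              + (intR w * pbr ω ζ (Wop ω ζ c v) x - intR v * pbr ω ζ (Wop ω ζ c w) x))
          - intR u * c * (eulerE (pbr ω v w) x
              + (intR w * eulerE (Wop ω ζ c v) x - intR v * eulerE (Wop ω ζ c w) x)) := by
      intro u v w hu hv hw
      have hKfun : (fun y => pbr ω v w y + mzeta ω ζ v w y + c * m3 v w y)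
          = fun y => pbr ω v w y + (intR w * Wop ω ζ c v y - intR v * Wop ω ζ c w y) := by
        funext y
        simp only [mzeta, m3, Wop]
        ring
      have hWv : ContDiff ℝ (⊤ : ℕ∞) (Wop ω ζ c v) := contDiff_W hζ hv.1 c
      have hWw : ContDiff ℝ (⊤ : ℕ∞) (Wop ω ζ c w) := contDiff_W hζ hw.1 c
      have hPvw : ContDiff ℝ (⊤ : ℕ∞) (pbr ω v w) := contDiff_pbr hv.1 hw.1
      have hKint : intR (fun y => pbr ω v w y
          + (intR w * Wop ω ζ c v y - intR v * Wop ω ζ c w y)) = 0 := by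
        have i1 : Integrable (pbr ω v w) :=
          integrable_cc hPvw.continuous (hcs_pbr hw.2)
        have i2 : Integrable (Wop ω ζ c v) :=
          integrable_cc hWv.continuous (hcs_W hv.2 c)
        have i3 : Integrable (Wop ω ζ c w) :=
          integrable_cc hWw.continuous (hcs_W hw.2 c)
        have i2' : Integrable (fun y => intR w * Wop ω ζ c v y) := i2.const_mul _
        have i3' : Integrable (fun y => intR v * Wop ω ζ c w y) := i3.const_mul _
        have i4 : Integrable (fun y => intR w * Wop ω ζ c v y - intR v * Wop ω ζ c w y) :=
          i2'.sub i3'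
        rw [intR, integral_add i1 i4, integral_sub i2' i3', integral_const_mul,
          integral_const_mul]
        have e0 : (∫ y, pbr ω v w y) = 0 := intR_pbr_zero hω hv.1 hw.1 hw.2
        have e1 : (∫ y, Wop ω ζ c v y) = c * (1 + (n : ℝ)/2) * intR v := hWint v hv
        have e2 : (∫ y, Wop ω ζ c w y) = c * (1 + (n : ℝ)/2) * intR w := hWint w hw
        rw [e0, e1, e2]
        ring
      rw [hKfun]
      simp only [mzeta, m3]
      rw [pbr_comb3_right hPvw hWv hWw u (intR w) (intR v) x,
        pbr_comb3_right hPvw hWv hWw ζ (intR w) (intR v) x,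
        eulerE_comb3 hPvw hWv hWw (intR w) (intR v) x, hKint]
      ring
    rw [hexp f g h hf hg hh, hexp g h f hg hh hf, hexp h f g hh hf hg]
    have J := jacobi_pbr hω hf.1 hg.1 hh.1 x
    have D1 := W_der hω hζ c hg.1 hh.1 x
    have D2 := W_der hω hζ c hh.1 hf.1 x
    have D3 := W_der hω hζ c hf.1 hg.1 x
    linear_combination J + intR f * D1 + intR g * D2 + intR h * D3
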